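/- Assume: (a) OBB_J(C̄, I) holds, where I is an ideal on S, otp(C_δ) = κ for every δ ∈ S, and C̄ is tree-like; (b) I is |i*|⁺-complete; (c) ⟨J_i : i < i*⟩ is a sequence of partial orders, each satisfying (∀s)(∃t)(s < t); (d) I* is an ideal on i*; (e) J is a partial order and ḡ = ⟨g_t : t ∈ J⟩, with g_t ∈ ∏_{i<i*} J_i, is such that {g_t : t ∈ J} is cofinal in (∏_{i<i*} J_i, ≤_{I*}) and s ≤_J t implies g_s ≤_{I*} g_t; (f) for each ε < κ there is a function F_ε from (ε+1)-sequences of elements of ∏_{i<i*} J_i to J such that: for every ζ < κ and every sequence ⟨f_ε : ε ≤ ζ⟩ of elements of ∏_{i<i*} J_i we have f_ζ ≤_{I*} g_{F_ζ(⟨f_ε : ε ≤ ζ⟩)}, and whenever f_ζ ∈ ∏_{i<i*} J_i (for ζ < κ) and t ∈ J satisfy F_ζ(⟨f_ε : ε ≤ ζ⟩) ≤_J t for all ζ < κ, then {i < i* : (∀ε < κ) f_ε(i) ≤_{J_i} g_t(i)} ∈ I*⁺. Then {i < i* : OBB_{J_i}(C̄, I)} ∈ I*⁺. -/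

import Mathlib

open Set Cardinal

universe u v

/-- `I` is an ideal on the set `S` of ordinals: it contains the empty set, is closed under
subsets and finite unions, consists of subsets of `S`, and `S ∉ I`. -/
structure IsIdealOn (I : Set (Set Ordinal)) (S : Set Ordinal) : Prop where
  mem_subset : ∀ A ∈ I, A ⊆ S
  empty_mem : ∅ ∈ I
  mono : ∀ A ∈ I, ∀ B ⊆ A, B ∈ I
  union_mem : ∀ A ∈ I, ∀ B ∈ I, A ∪ B ∈ I
  base_not_mem : S ∉ I

/-- `I` is an ideal on the type `ι`. -/
structure IsIdeal {ι : Type u} (I : Set (Set ι)) : Prop where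
  empty_mem : ∅ ∈ I
  mono : ∀ A ∈ I, ∀ B ⊆ A, B ∈ I
  union_mem : ∀ A ∈ I, ∀ B ∈ I, A ∪ B ∈ I
  univ_not_mem : Set.univ ∉ I

/-- `I` is `μ`-complete: closed under unions of fewer than `μ` of its members. -/
def IdealComplete {α : Type u} (I : Set (Set α)) (μ : Cardinal.{u}) : Prop :=
  ∀ T : Set (Set α), T ⊆ I → #T < μ → ⋃₀ T ∈ I

/-- The order type of a set of ordinals. -/
noncomputable def otp (s : Set Ordinal.{0}) : Ordinal.{1} :=
  Ordinal.type (Subrel ((· < ·) : Ordinal → Ordinal → Prop) (· ∈ s))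

/-- `OBB_J(C̄, I)`: there is `t̄ = ⟨t_δ : δ ∈ S⟩` in `J` such that for every
`f : Dom(C̄) → J` the set `{δ ∈ S : ∀ α ∈ C_δ, f α ≤ t_δ}` is `I`-positive. -/
def OBB (J : Type u) [PartialOrder J] (S : Set Ordinal) (C : Ordinal → Set Ordinal)
    (I : Set (Set Ordinal)) : Prop :=
  ∃ t : Ordinal → J, ∀ f : Ordinal → J,
    {δ ∈ S | ∀ α ∈ C δ, f α ≤ t δ} ∉ I

/-- `OBB⁺_J(C̄, I)`: as `OBB` but the good set equals `S` mod `I`. -/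
def OBBplus (J : Type u) [PartialOrder J] (S : Set Ordinal) (C : Ordinal → Set Ordinal)
    (I : Set (Set Ordinal)) : Prop :=
  ∃ t : Ordinal → J, ∀ f : Ordinal → J,
    S \ {δ ∈ S | ∀ α ∈ C δ, f α ≤ t δ} ∈ I

/-- `C̄` is tree-like. -/
def TreeLike (S : Set Ordinal) (C : Ordinal → Set Ordinal) : Prop :=
  ∀ δ₁ ∈ S, ∀ δ₂ ∈ S, ∀ α, α ∈ C δ₁ → α ∈ C δ₂ → C δ₁ ∩ Set.Iio α = C δ₂ ∩ Set.Iio α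

/-- A partial order is `κ`-directed: every subset of cardinality `< κ` has an upper bound. -/
def KDirected (J : Type u) [PartialOrder J] (κ : Cardinal.{u}) : Prop :=
  ∀ s : Set J, #s < κ → ∃ ub : J, ∀ x ∈ s, x ≤ ub

/-- `f ≤_{I*} g` for elements of the product `∏_{i} Ji i`. -/
def prodLE {ι : Type 1} (Ji : ι → Type 1) [∀ i, PartialOrder (Ji i)]
    (Istar : Set (Set ι)) (f g : ∀ i, Ji i) : Prop :=
  {i | ¬ f i ≤ g i} ∈ Istar

/-- `f <_{I*} g` for elements of the product `∏_{i} Ji i`. -/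
def prodLT {ι : Type 1} (Ji : ι → Type 1) [∀ i, PartialOrder (Ji i)]
    (Istar : Set (Set ι)) (f g : ∀ i, Ji i) : Prop :=
  {i | ¬ f i < g i} ∈ Istar

/-- `E` is closed in `lam`. -/
def IsClosedIn (E : Set Ordinal) (lam : Ordinal) : Prop :=
  ∀ δ < lam, δ ≠ 0 → (∀ α < δ, ∃ β ∈ E, α < β ∧ β < δ) → δ ∈ E

/-- `E` is a club of `lam`. -/
def IsClubIn (E : Set Ordinal) (lam : Ordinal) : Prop :=
  (∀ β ∈ E, β < lam) ∧ (∀ α < lam, ∃ β ∈ E, α ≤ β) ∧ IsClosedIn E lam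

/-- `A` is stationary in `lam`. -/
def IsStationaryIn (A : Set Ordinal) (lam : Ordinal) : Prop :=
  ∀ E, IsClubIn E lam → (A ∩ E).Nonempty

/-!
Suppose `A = {i | OBB_{J_i}(C̄, I)}` were in `I*` and let `t̄` witness `OBB_J(C̄, I)`. For each
`i ∉ A` the sequence `⟨g_{t_δ}(i) : δ ∈ S⟩` fails to witness `OBB_{J_i}`, so some `f_i` is bounded
by it only on a set `B_i ∈ I`. Along each `C_δ`, enumerated as `⟨α_ε : ε < κ⟩`, the `F_ζ` turn
`⟨(f_i(α_ε))_i : ε ≤ ζ⟩` into a label in `J` of the node `α_ζ`; tree-likeness makes this label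
independent of `δ`, so it is a single `h : Dom(C̄) → J`. Whenever `h ≤ t_δ` on `C_δ`, the bound
on the `F_ζ` gives positively many `i`, hence some `i ∉ A`, with `δ ∈ B_i`. So the `I`-positive
set of such `δ` is covered by `⋃_{i ∉ A} B_i`, which lies in `I` by `|i*|⁺`-completeness.
-/

section Enumeration

variable {s t : Set Ordinal.{0}} {α β : Ordinal.{0}} {ε : Ordinal.{1}}

/-- The `ε`-th element of `s` in increasing order; junk value `0` when `otp s ≤ ε`. -/
noncomputable def enumIn (s : Set Ordinal.{0}) (ε : Ordinal.{1}) : Ordinal.{0} :=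
  if h : ε < otp s then
    (Ordinal.enum (Subrel ((· < ·) : Ordinal → Ordinal → Prop) (· ∈ s)) ⟨ε, h⟩).1
  else 0

theorem otp_inter_Iio (h : α ∈ s) :
    otp (s ∩ Iio α) = Ordinal.typein (Subrel ((· < ·) : Ordinal → Ordinal → Prop) (· ∈ s)) ⟨α, h⟩ := by
  rw [← Ordinal.type_subrel]
  exact Ordinal.type_eq.2 ⟨⟨⟨fun b => ⟨⟨b.1, b.2.1⟩, b.2.2⟩, fun b => ⟨b.1.1, b.1.2, b.2⟩,
    fun _ => rfl, fun _ => rfl⟩, Iff.rfl⟩⟩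

theorem otp_inter_Iio_lt_otp (h : α ∈ s) : otp (s ∩ Iio α) < otp s := by
  rw [otp_inter_Iio h]
  exact Ordinal.typein_lt_type _ _

theorem otp_inter_Iio_le_otp_inter_Iio_iff (hα : α ∈ s) (hβ : β ∈ s) :
    otp (s ∩ Iio α) ≤ otp (s ∩ Iio β) ↔ α ≤ β := by
  rw [otp_inter_Iio hα, otp_inter_Iio hβ, Ordinal.typein_le_typein]
  exact not_lt

theorem enumIn_mem (h : ε < otp s) : enumIn s ε ∈ s := by
  rw [enumIn, dif_pos h]
  exact Subtype.prop _

theorem otp_inter_Iio_enumIn (h : ε < otp s) : otp (s ∩ Iio (enumIn s ε)) = ε := by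
  have he : enumIn s ε = (Ordinal.enum _ ⟨ε, h⟩).1 := dif_pos h
  rw [he, otp_inter_Iio (Subtype.prop _), Subtype.coe_eta]
  exact Ordinal.typein_enum _ h

theorem enumIn_otp_inter_Iio (h : α ∈ s) : enumIn s (otp (s ∩ Iio α)) = α := by
  rw [enumIn, dif_pos (otp_inter_Iio_lt_otp h)]
  simp only [otp_inter_Iio h, Ordinal.enum_typein]

theorem forall_mem_iff_forall_lt_otp {P : Ordinal.{0} → Prop} :
    (∀ α ∈ s, P α) ↔ ∀ ε < otp s, P (enumIn s ε) :=
  ⟨fun hP _ hε => hP _ (enumIn_mem hε),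
    fun hP _ hα => enumIn_otp_inter_Iio hα ▸ hP _ (otp_inter_Iio_lt_otp hα)⟩

theorem enumIn_eq_enumIn_of_inter_Iic_eq (hst : s ∩ Iic α = t ∩ Iic α) (hα : α ∈ s)
    (hε : ε ≤ otp (s ∩ Iio α)) : enumIn s ε = enumIn t ε := by
  have hεs : ε < otp s := hε.trans_lt (otp_inter_Iio_lt_otp hα)
  set β := enumIn s ε
  have hβs : β ∈ s := enumIn_mem hεs
  have hβε : otp (s ∩ Iio β) = ε := otp_inter_Iio_enumIn hεs
  have hβα : β ≤ α := (otp_inter_Iio_le_otp_inter_Iio_iff hβs hα).1 (hβε ▸ hε)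
  have hβt : β ∈ t := (hst.subset ⟨hβs, hβα⟩).1
  have hIio : ∀ u : Set Ordinal.{0}, u ∩ Iio β = u ∩ Iic α ∩ Iio β := fun u => by
    rw [inter_assoc, inter_eq_right.2 (Iio_subset_Iic_self.trans (Iic_subset_Iic.2 hβα))]
  have hseg : t ∩ Iio β = s ∩ Iio β := by rw [hIio t, hIio s, hst]
  rw [← hβε, ← hseg, enumIn_otp_inter_Iio hβt]

end Enumeration

theorem TreeLike.inter_Iic_eq {S : Set Ordinal} {C : Ordinal → Set Ordinal} (htree : TreeLike S C)
    {δ₁ δ₂ α : Ordinal} (hδ₁ : δ₁ ∈ S) (hδ₂ : δ₂ ∈ S) (hα₁ : α ∈ C δ₁) (hα₂ : α ∈ C δ₂) :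
    C δ₁ ∩ Iic α = C δ₂ ∩ Iic α := by
  rw [← Iio_insert, inter_insert_of_mem hα₁, inter_insert_of_mem hα₂,
    htree δ₁ hδ₁ δ₂ hδ₂ α hα₁ hα₂]

theorem TreeLike.exists_forall_enumIn_eq {X Y : Type*} {S : Set Ordinal.{0}}
    {C : Ordinal.{0} → Set Ordinal.{0}} (htree : TreeLike S C) {o : Ordinal.{1}}
    (hotp : ∀ δ ∈ S, otp (C δ) ≤ o) (F : Ordinal.{1} → (Ordinal.{1} → X) → Y)
    (hF : ∀ ζ < o, ∀ fs fs' : Ordinal.{1} → X, (∀ ε ≤ ζ, fs ε = fs' ε) → F ζ fs = F ζ fs')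
    (f : Ordinal.{0} → X) :
    ∃ lab : Ordinal.{0} → Y, ∀ δ ∈ S, ∀ ζ < otp (C δ),
      lab (enumIn (C δ) ζ) = F ζ (f ∘ enumIn (C δ)) := by
  let node (α : Ordinal.{0}) : Ordinal.{0} := Classical.epsilon fun δ => δ ∈ S ∧ α ∈ C δ
  refine ⟨fun α => F (otp (C (node α) ∩ Iio α)) (f ∘ enumIn (C (node α))), ?_⟩
  intro δ hδ ζ hζ
  set α := enumIn (C δ) ζ
  have hα : α ∈ C δ := enumIn_mem hζ
  obtain ⟨hδ', hα'⟩ : node α ∈ S ∧ α ∈ C (node α) :=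
    Classical.epsilon_spec (p := fun δ => δ ∈ S ∧ α ∈ C δ) ⟨δ, hδ, hα⟩
  have hζ' : otp (C (node α) ∩ Iio α) = ζ := by
    rw [htree _ hδ' δ hδ α hα' hα, otp_inter_Iio_enumIn hζ]
  simp only [hζ']
  refine hF ζ (hζ.trans_le (hotp δ hδ)) _ _ fun ε hε => congrArg f ?_
  exact enumIn_eq_enumIn_of_inter_Iic_eq (htree.inter_Iic_eq hδ' hδ hα' hα) hα' (hζ'.ge.trans' hε)

theorem not_OBB_iff {J : Type*} [PartialOrder J] {S : Set Ordinal} {C : Ordinal → Set Ordinal}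
    {I : Set (Set Ordinal)} :
    ¬ OBB J S C I ↔ ∀ t : Ordinal → J, ∃ f : Ordinal → J, {δ ∈ S | ∀ α ∈ C δ, f α ≤ t δ} ∈ I := by
  simp only [OBB, not_exists, not_forall, not_not]

theorem IdealComplete.biUnion_mem {α ι : Type u} {I : Set (Set α)}
    (hI : IdealComplete I (Order.succ #ι)) {T : Set ι} {B : ι → Set α} (hB : ∀ i ∈ T, B i ∈ I) :
    ⋃ i ∈ T, B i ∈ I := by
  rw [← sUnion_image]
  refine hI _ (fun _ ⟨i, hi, hBi⟩ => hBi ▸ hB i hi) ?_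
  exact Order.lt_succ_of_le (mk_image_le.trans (mk_set_le T))

theorem stmt7_general {ι : Type 1} {J : Type 1} [PartialOrder J]
    (Ji : ι → Type 1) [∀ i, PartialOrder (Ji i)]
    (S : Set Ordinal) (C : Ordinal → Set Ordinal)
    (I : Set (Set Ordinal)) (Istar : Set (Set ι)) (κ : Cardinal.{1})
    -- (a)
    (hOBB : OBB J S C I) (hI : IsIdealOn I S)
    (hotp : ∀ δ ∈ S, otp (C δ) = κ.ord) (htree : TreeLike S C)
    -- (b) `I` is `|i*|⁺`-complete
    (hIcomp : IdealComplete I (Order.succ #ι))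
    -- (d)
    (hIstar : IsIdeal Istar)
    -- (e)
    (g : J → ∀ i, Ji i)
    -- (f): `F ζ` encodes `F_ζ`, a function of `(ζ+1)`-sequences
    (F : Ordinal.{1} → (Ordinal.{1} → ∀ i, Ji i) → J)
    (hFdep : ∀ ζ < κ.ord, ∀ fs fs' : Ordinal.{1} → ∀ i, Ji i,
      (∀ ε ≤ ζ, fs ε = fs' ε) → F ζ fs = F ζ fs')
    (hFbound : ∀ fs : Ordinal.{1} → ∀ i, Ji i, ∀ t : J,
      (∀ ζ < κ.ord, F ζ fs ≤ t) →
      {i | ∀ ε < κ.ord, fs ε i ≤ g t i} ∉ Istar) :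
    {i | OBB (Ji i) S C I} ∉ Istar := by
  intro hA
  obtain ⟨t, ht⟩ := hOBB
  have hJne : ∀ i, Nonempty (Ji i) := fun i => ⟨g (t 0) i⟩
  choose! f hf using fun i (hi : i ∈ {i | OBB (Ji i) S C I}ᶜ) =>
    not_OBB_iff.1 hi fun δ => g (t δ) i
  obtain ⟨lab, hlab⟩ := htree.exists_forall_enumIn_eq (fun δ hδ => (hotp δ hδ).le) F hFdep
    fun α i => f i α
  refine ht lab (hI.mono _ (hIcomp.biUnion_mem hf) _ ?_)
  rintro δ ⟨hδ, hlabδ⟩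
  have hFt : ∀ ζ < κ.ord, F ζ ((fun α i => f i α) ∘ enumIn (C δ)) ≤ t δ := fun ζ hζ => by
    rw [← hotp δ hδ] at hζ
    exact hlab δ hδ ζ hζ ▸ hlabδ _ (enumIn_mem hζ)
  obtain ⟨i, hi, hiA⟩ := not_subset.1 fun h => hFbound _ _ hFt (hIstar.mono _ hA _ h)
  exact mem_biUnion hiA ⟨hδ, forall_mem_iff_forall_lt_otp.2 fun ε hε => hi ε (hotp δ hδ ▸ hε)⟩

/-- Pos (E) of the main lemma. Under (a)–(e), with `C̄` tree-like of order
type `κ`, and (f): functions `F_ε` (for `ε < κ`) of `(ε+1)`-sequences of product elements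
(encoded as functions `Ordinal → ∏ Ji`, depending only on the coordinates `≤ ε`) such that
`f_ζ ≤_{I*} g_{F_ζ(⟨f_ε : ε ≤ ζ⟩)}` always, and whenever all values `F_ζ(⟨f_ε : ε ≤ ζ⟩)`
are `≤_J t`, positively many coordinates `i` satisfy `f_ε(i) ≤ g_t(i)` for all `ε < κ`;
then `{i < i* : OBB_{J_i}(C̄, I)}` is `I*`-positive. -/
theorem stmt7 {ι : Type 1} {J : Type 1} [PartialOrder J]
    (Ji : ι → Type 1) [∀ i, PartialOrder (Ji i)]
    (S : Set Ordinal) (C : Ordinal → Set Ordinal)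
    (I : Set (Set Ordinal)) (Istar : Set (Set ι)) (κ : Cardinal.{1})
    -- (a)
    (hOBB : OBB J S C I) (hI : IsIdealOn I S) (hC : ∀ δ ∈ S, C δ ⊆ Set.Iio δ)
    (hotp : ∀ δ ∈ S, otp (C δ) = κ.ord) (htree : TreeLike S C)
    -- (b) `I` is `|i*|⁺`-complete
    (hIcomp : IdealComplete I (Order.succ #ι))
    -- (c)
    (hJi : ∀ i, ∀ s : Ji i, ∃ t : Ji i, s < t)
    -- (d)
    (hIstar : IsIdeal Istar)
    -- (e)
    (g : J → ∀ i, Ji i)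
    (hcof : ∀ f : ∀ i, Ji i, ∃ t : J, prodLE Ji Istar f (g t))
    (hmono : ∀ s t : J, s ≤ t → prodLE Ji Istar (g s) (g t))
    -- (f): `F ζ` encodes `F_ζ`, a function of `(ζ+1)`-sequences
    (F : Ordinal.{1} → (Ordinal.{1} → ∀ i, Ji i) → J)
    (hFdep : ∀ ζ < κ.ord, ∀ fs fs' : Ordinal.{1} → ∀ i, Ji i,
      (∀ ε ≤ ζ, fs ε = fs' ε) → F ζ fs = F ζ fs')
    (hF : ∀ ζ < κ.ord, ∀ fs : Ordinal.{1} → ∀ i, Ji i,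
      prodLE Ji Istar (fs ζ) (g (F ζ fs)))
    (hFbound : ∀ fs : Ordinal.{1} → ∀ i, Ji i, ∀ t : J,
      (∀ ζ < κ.ord, F ζ fs ≤ t) →
      {i | ∀ ε < κ.ord, fs ε i ≤ g t i} ∉ Istar) :
    {i | OBB (Ji i) S C I} ∉ Istar :=
  stmt7_general Ji S C I Istar κ hOBB hI hotp htree hIcomp hIstar g F hFdep hFbound
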